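/- arXiv:2504.17202 — 3 statements merged into one kernel-verified Lean document; each statement's English description precedes it below -/
import Mathlib

section
/- Let k ≥ 1, let p_1,…,p_k be nonnegative reals with ∑_{x=1}^k p_x = 1, and let c_1,…,c_k ∈ [0,1]. Then the function v ↦ (∑_{x=1}^k p_x^v · c_x^{v−1})^{1/v} is nonincreasing on [1,∞): for all real numbers v, w with 1 ≤ v ≤ w, (∑_{x=1}^k p_x^w · c_x^{w−1})^{1/w} ≤ (∑_{x=1}^k p_x^v · c_x^{v−1})^{1/v}. -/
set_option linter.unusedVariables false

open Finset

lemma sum_rpow_le_rpow_sum' {ι : Type*} (s : Finset ι) (a : ι → ℝ)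
    (ha : ∀ i ∈ s, 0 ≤ a i) {t : ℝ} (ht : 1 ≤ t) :
    ∑ i ∈ s, a i ^ t ≤ (∑ i ∈ s, a i) ^ t := by
  have hA : 0 ≤ ∑ i ∈ s, a i := Finset.sum_nonneg ha
  have ht0 : (0:ℝ) ≤ t - 1 := by linarith
  calc ∑ i ∈ s, a i ^ t = ∑ i ∈ s, a i ^ (1:ℝ) * a i ^ (t - 1) := by
        refine Finset.sum_congr rfl fun i hi => ?_
        rw [← Real.rpow_add' (ha i hi) (by norm_num; linarith)]
        norm_num
    _ ≤ ∑ i ∈ s, a i * (∑ j ∈ s, a j) ^ (t - 1) := by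
        refine Finset.sum_le_sum fun i hi => ?_
        rw [Real.rpow_one]
        exact mul_le_mul_of_nonneg_left
          (Real.rpow_le_rpow (ha i hi) (Finset.single_le_sum ha hi) ht0) (ha i hi)
    _ = (∑ i ∈ s, a i) ^ t := by
        rw [← Finset.sum_mul, ← Real.rpow_one_add' hA (by norm_num; linarith)]
        ring_nf

/-- the map v ↦ (∑ p_x^v c_x^{v-1})^{1/v} is nonincreasing on [1,∞). -/
theorem stmt1 {k : ℕ} (hk : 1 ≤ k) (p c : Fin k → ℝ)
    (hp : ∀ i, 0 ≤ p i) (hpsum : ∑ i, p i = 1)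
    (hc : ∀ i, c i ∈ Set.Icc (0 : ℝ) 1)
    (v w : ℝ) (hv : 1 ≤ v) (hvw : v ≤ w) :
    (∑ x, p x ^ w * c x ^ (w - 1)) ^ (1 / w) ≤
      (∑ x, p x ^ v * c x ^ (v - 1)) ^ (1 / v) := by
  have hv0 : (0:ℝ) < v := lt_of_lt_of_le one_pos hv
  have hw1 : (1:ℝ) ≤ w := hv.trans hvw
  have hw0 : (0:ℝ) < w := lt_of_lt_of_le one_pos hw1
  have hSv : 0 ≤ ∑ x, p x ^ v * c x ^ (v - 1) := by
    refine Finset.sum_nonneg fun x _ => ?_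
    exact mul_nonneg (Real.rpow_nonneg (hp x) _) (Real.rpow_nonneg (hc x).1 _)
  -- pointwise bound
  have key : ∀ x, p x ^ w * c x ^ (w - 1) ≤ (p x ^ v * c x ^ (v - 1)) ^ (w / v) := by
    intro x
    obtain ⟨hc0, hc1⟩ := hc x
    rcases eq_or_lt_of_le hc0 with h0 | hcpos
    · -- c x = 0
      rcases eq_or_lt_of_le hw1 with hw1' | hw1'
      · -- w = 1, hence v = 1
        have hv1 : v = 1 := le_antisymm (hvw.trans hw1'.symm.le) hv
        rw [← hw1', hv1]
        simp
      · -- 1 < w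
        have : c x ^ (w - 1) = 0 := by
          rw [← h0, Real.zero_rpow (by linarith)]
        rw [this, mul_zero]
        exact Real.rpow_nonneg (mul_nonneg (Real.rpow_nonneg (hp x) _)
          (Real.rpow_nonneg hc0 _)) _
    · -- 0 < c x
      have hrw : (p x ^ v * c x ^ (v - 1)) ^ (w / v)
          = p x ^ w * c x ^ (w - w / v) := by
        rw [Real.mul_rpow (Real.rpow_nonneg (hp x) _) (Real.rpow_nonneg hc0 _),
          ← Real.rpow_mul (hp x), ← Real.rpow_mul hc0]
        congr 1
        · congr 1; field_simp
        · congr 1; field_simp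
      rw [hrw]
      refine mul_le_mul_of_nonneg_left ?_ (Real.rpow_nonneg (hp x) _)
      refine Real.rpow_le_rpow_of_exponent_ge hcpos hc1 ?_
      have : 1 ≤ w / v := (one_le_div hv0).mpr hvw
      linarith
  have hwv1 : 1 ≤ w / v := (one_le_div hv0).mpr hvw
  have step : (∑ x, p x ^ w * c x ^ (w - 1))
      ≤ (∑ x, p x ^ v * c x ^ (v - 1)) ^ (w / v) := by
    calc (∑ x, p x ^ w * c x ^ (w - 1))
        ≤ ∑ x, (p x ^ v * c x ^ (v - 1)) ^ (w / v) :=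
          Finset.sum_le_sum fun x _ => key x
      _ ≤ (∑ x, p x ^ v * c x ^ (v - 1)) ^ (w / v) :=
          sum_rpow_le_rpow_sum' _ _ (fun x _ => mul_nonneg (Real.rpow_nonneg (hp x) _)
            (Real.rpow_nonneg (hc x).1 _)) hwv1
  have hSw : 0 ≤ ∑ x, p x ^ w * c x ^ (w - 1) := by
    refine Finset.sum_nonneg fun x _ => ?_
    exact mul_nonneg (Real.rpow_nonneg (hp x) _) (Real.rpow_nonneg (hc x).1 _)
  calc (∑ x, p x ^ w * c x ^ (w - 1)) ^ (1 / w)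
      ≤ ((∑ x, p x ^ v * c x ^ (v - 1)) ^ (w / v)) ^ (1 / w) :=
        Real.rpow_le_rpow hSw step (by positivity)
    _ = (∑ x, p x ^ v * c x ^ (v - 1)) ^ (1 / v) := by
        rw [← Real.rpow_mul hSv]
        congr 1
        field_simp
end

section
/- For every c > 0 and every natural number D ≥ 1 there exists a constant C = C(c,D) > 0 such that: for every k ≥ 1, every block-model parameter pair (p,Q) on k communities with p i ≥ c for all i, and every connected finite simple graph H with |E(H)| ≤ D and |E(H)| ≥ |V(H)| (i.e. H is connected and not a tree), Ψ_{p,Q}(H) ≤ C · Ψ_{p,Q}(Cyc_4). -/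
/-!
Put `S = ∑ a b, p a * p b * Q a b ^ 2`. Since `p ≥ c`, every entry obeys `|Q i j| ≤ √S / c`; as
also `|Q i j| ≤ 1`, each term of `Φ(H)` is bounded by `min (√S / c) 1 ^ |E(H)| ≤ min (√S / c) 1 ^ |V(H)|`,
so `Ψ(H) ≤ √S / c`. On the other side `Φ(C₄) = ∑ a c, p a * p c * M a c ^ 2` with
`M a c = ∑ b, p b * Q a b * Q b c`; keeping only the diagonal and using `p a ≥ c` and Jensen,
`Φ(C₄) ≥ c * (∑ a, p a * M a a) ^ 2 = c * S ^ 2`, so `Ψ(C₄) ≥ c ^ (1/4) * √S`. Hence `C = c ^ (-5/4)`.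
-/

set_option linter.unusedVariables false

open Finset

open Finset

/-- The Fourier coefficient Φ_{p,Q}(H) of a finite simple graph `H`. -/
noncomputable def Phi {k : ℕ} (p : Fin k → ℝ) (Q : Fin k → Fin k → ℝ)
    (hQ : ∀ i j, Q i j = Q j i) {V : Type} [Fintype V] [DecidableEq V]
    (H : SimpleGraph V) [DecidableRel H.Adj] : ℝ :=
  ∑ x : V → Fin k, (∏ v, p (x v)) *
    ∏ e ∈ H.edgeFinset,
      Sym2.lift ⟨fun u v => Q (x u) (x v), fun u v => hQ (x u) (x v)⟩ e

/-- The partition value Ψ_{p,Q}(H) = |Φ_{p,Q}(H)|^{1/|V(H)|}. -/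
noncomputable def Psi {k : ℕ} (p : Fin k → ℝ) (Q : Fin k → Fin k → ℝ)
    (hQ : ∀ i j, Q i j = Q j i) {V : Type} [Fintype V] [DecidableEq V]
    (H : SimpleGraph V) [DecidableRel H.Adj] : ℝ :=
  |Phi p Q hQ H| ^ ((Fintype.card V : ℝ)⁻¹)

/-- The star graph with one center (vertex 0) joined to `t` leaves. -/
def StarGraph (t : ℕ) : SimpleGraph (Fin (t + 1)) where
  Adj u v := u ≠ v ∧ (u = 0 ∨ v = 0)
  symm := ⟨fun u v h => ⟨h.1.symm, h.2.symm⟩⟩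
  loopless := ⟨fun u h => h.1 rfl⟩

instance (t : ℕ) : DecidableRel (StarGraph t).Adj :=
  fun u v => inferInstanceAs (Decidable (u ≠ v ∧ (u = 0 ∨ v = 0)))

/-- The cycle graph on 4 vertices. -/
def Cyc4 : SimpleGraph (Fin 4) where
  Adj u v := u ≠ v ∧ ((u.val + 1) % 4 = v.val ∨ (v.val + 1) % 4 = u.val)
  symm := ⟨fun u v h => ⟨h.1.symm, h.2.symm⟩⟩
  loopless := ⟨fun u h => h.1 rfl⟩

instance : DecidableRel Cyc4.Adj :=
  fun u v => inferInstanceAs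
    (Decidable (u ≠ v ∧ ((u.val + 1) % 4 = v.val ∨ (v.val + 1) % 4 = u.val)))

variable {k : ℕ} {p : Fin k → ℝ} {Q : Fin k → Fin k → ℝ} {hQ : ∀ i j, Q i j = Q j i}
  {V : Type} [Fintype V] [DecidableEq V] {H : SimpleGraph V} [DecidableRel H.Adj]

lemma sum_pi_prod_eq_one (hp1 : ∑ i, p i = 1) : ∑ x : V → Fin k, ∏ v, p (x v) = 1 := by
  rw [← Fintype.prod_sum (fun (_ : V) i => p i), hp1, prod_const_one]

lemma abs_Phi_le_pow (hp0 : ∀ i, 0 ≤ p i) (hp1 : ∑ i, p i = 1) {B : ℝ}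
    (hQB : ∀ i j, |Q i j| ≤ B) : |Phi p Q hQ H| ≤ B ^ #H.edgeFinset := by
  have hterm (x : V → Fin k) :
      |∏ e ∈ H.edgeFinset, Sym2.lift ⟨fun u v => Q (x u) (x v), fun u v => hQ (x u) (x v)⟩ e|
        ≤ B ^ #H.edgeFinset := by
    rw [abs_prod, ← prod_const]
    refine prod_le_prod (fun _ _ => abs_nonneg _) fun e _ => ?_
    induction e using Sym2.ind with
    | _ u v => exact hQB (x u) (x v)
  calc |Phi p Q hQ H|
      ≤ ∑ x : V → Fin k, (∏ v, p (x v)) * B ^ #H.edgeFinset := by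
        refine (abs_sum_le_sum_abs _ _).trans (sum_le_sum fun x _ => ?_)
        rw [abs_mul, abs_of_nonneg (prod_nonneg fun v _ => hp0 (x v))]
        exact mul_le_mul_of_nonneg_left (hterm x) (prod_nonneg fun v _ => hp0 (x v))
    _ = B ^ #H.edgeFinset := by rw [← sum_mul, sum_pi_prod_eq_one hp1, one_mul]

lemma Psi_le_of_abs_Phi_le_pow [Nonempty V] {B : ℝ} (hB : 0 ≤ B)
    (h : |Phi p Q hQ H| ≤ B ^ Fintype.card V) : Psi p Q hQ H ≤ B := by
  rwa [Psi, Real.rpow_inv_le_iff_of_pos (abs_nonneg _) hB (by positivity), Real.rpow_natCast]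

lemma le_Psi_of_pow_le_abs_Phi [Nonempty V] {b : ℝ} (hb : 0 ≤ b)
    (h : b ^ Fintype.card V ≤ |Phi p Q hQ H|) : b ≤ Psi p Q hQ H := by
  rwa [Psi, Real.le_rpow_inv_iff_of_pos hb (abs_nonneg _) (by positivity), Real.rpow_natCast]

lemma Psi_le_of_abs_le [Nonempty V] (hp0 : ∀ i, 0 ≤ p i) (hp1 : ∑ i, p i = 1)
    (hQ1 : ∀ i j, |Q i j| ≤ 1) {B : ℝ} (hB : 0 ≤ B) (hQB : ∀ i j, |Q i j| ≤ B)
    (hVE : Fintype.card V ≤ #H.edgeFinset) : Psi p Q hQ H ≤ B := by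
  have hB' : 0 ≤ min B 1 := le_min hB zero_le_one
  refine (Psi_le_of_abs_Phi_le_pow hB' ?_).trans (min_le_left B 1)
  calc |Phi p Q hQ H| ≤ min B 1 ^ #H.edgeFinset :=
        abs_Phi_le_pow hp0 hp1 fun i j => le_min (hQB i j) (hQ1 i j)
    _ ≤ min B 1 ^ Fintype.card V := pow_le_pow_of_le_one hB' (min_le_right B 1) hVE

def l2NormSq (p : Fin k → ℝ) (Q : Fin k → Fin k → ℝ) : ℝ :=
  ∑ a, ∑ b, p a * p b * Q a b ^ 2

lemma mul_mul_sq_le_l2NormSq (hp0 : ∀ i, 0 ≤ p i) (i j : Fin k) :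
    p i * p j * Q i j ^ 2 ≤ l2NormSq p Q := by
  have hterm (a b : Fin k) : 0 ≤ p a * p b * Q a b ^ 2 := by
    have := hp0 a; have := hp0 b; positivity
  calc p i * p j * Q i j ^ 2 ≤ ∑ b, p i * p b * Q i b ^ 2 :=
        single_le_sum (fun b _ => hterm i b) (mem_univ j)
    _ ≤ l2NormSq p Q :=
        single_le_sum (f := fun a => ∑ b, p a * p b * Q a b ^ 2)
          (fun a _ => sum_nonneg fun b _ => hterm a b) (mem_univ i)

lemma l2NormSq_nonneg (hp0 : ∀ i, 0 ≤ p i) : 0 ≤ l2NormSq p Q :=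
  sum_nonneg fun a _ => sum_nonneg fun b _ => by have := hp0 a; have := hp0 b; positivity

lemma abs_le_sqrt_l2NormSq_div {c : ℝ} (hc : 0 < c) (hpc : ∀ i, c ≤ p i) (i j : Fin k) :
    |Q i j| ≤ √(l2NormSq p Q) / c := by
  have hp0 (a : Fin k) : 0 ≤ p a := hc.le.trans (hpc a)
  rw [le_div_iff₀ hc, ← Real.sqrt_sq (by positivity : 0 ≤ |Q i j| * c)]
  refine Real.sqrt_le_sqrt ((?_ : _ ≤ p i * p j * Q i j ^ 2).trans (mul_mul_sq_le_l2NormSq hp0 i j))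
  rw [mul_pow, sq_abs, mul_comm]
  exact mul_le_mul_of_nonneg_right (by nlinarith [hpc i, hpc j]) (sq_nonneg _)

lemma Phi_Cyc4 :
    Phi p Q hQ Cyc4 = ∑ a, ∑ c, p a * p c * (∑ b, p b * Q a b * Q b c) ^ 2 := by
  have hE (f : Sym2 (Fin 4) → ℝ) :
      ∏ e ∈ Cyc4.edgeFinset, f e = f s(0, 1) * (f s(1, 2) * (f s(2, 3) * f s(0, 3))) := by
    rw [show Cyc4.edgeFinset = {s(0, 1), s(1, 2), s(2, 3), s(0, 3)} by decide,
      prod_insert (by decide), prod_insert (by decide), prod_insert (by decide), prod_singleton]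
  simp only [Phi, hE, Sym2.lift_mk, Fin.prod_univ_four, ← (Fin.consEquiv fun _ => Fin k).sum_comp,
    Fintype.sum_prod_type, Fintype.sum_unique, Matrix.empty_eq (default : Fin 0 → Fin k),
    Fin.consEquiv, Equiv.coe_fn_mk, Matrix.Fin.cons_vecEmpty, Matrix.Fin.cons_vecCons, Matrix.cons_val]
  refine sum_congr rfl fun a _ => ?_
  rw [sum_comm]
  refine sum_congr rfl fun c _ => ?_
  rw [sq, sum_mul_sum]
  simp only [mul_sum]
  refine sum_congr rfl fun b _ => sum_congr rfl fun d _ => ?_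
  rw [hQ d c]
  ring

lemma mul_l2NormSq_sq_le_Phi_Cyc4 {c : ℝ} (hc : 0 ≤ c)
    (hpc : ∀ i, c ≤ p i) (hp1 : ∑ i, p i = 1) :
    c * l2NormSq p Q ^ 2 ≤ Phi p Q hQ Cyc4 := by
  have hp0 (a : Fin k) : 0 ≤ p a := hc.trans (hpc a)
  set M : Fin k → ℝ := fun a => ∑ b, p b * Q a b * Q b a
  have hM (a : Fin k) : 0 ≤ p a * M a ^ 2 := mul_nonneg (hp0 a) (sq_nonneg _)
  have hS : l2NormSq p Q = ∑ a, p a * M a := by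
    simp only [l2NormSq, M, mul_sum]
    refine sum_congr rfl fun a _ => sum_congr rfl fun b _ => ?_
    rw [hQ b a]
    ring
  have jensen : l2NormSq p Q ^ 2 ≤ ∑ a, p a * M a ^ 2 := by
    have := sum_sq_le_sum_mul_sum_of_sq_le_mul univ (fun a _ => hp0 a) (fun a _ => hM a)
      (r := fun a => p a * M a) fun a _ => (by ring : (p a * M a) ^ 2 = p a * (p a * M a ^ 2)).le
    rwa [hp1, one_mul, ← hS] at this
  calc c * l2NormSq p Q ^ 2 ≤ c * ∑ a, p a * M a ^ 2 := mul_le_mul_of_nonneg_left jensen hc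
    _ = ∑ a, c * (p a * M a ^ 2) := mul_sum _ _ _
    _ ≤ ∑ a, p a * p a * M a ^ 2 := sum_le_sum fun a _ => by
        rw [mul_assoc]
        exact mul_le_mul_of_nonneg_right (hpc a) (hM a)
    _ ≤ Phi p Q hQ Cyc4 := by
        rw [Phi_Cyc4]
        gcongr with a
        exact single_le_sum (f := fun c => p a * p c * (∑ b, p b * Q a b * Q b c) ^ 2)
          (fun c _ => mul_nonneg (mul_nonneg (hp0 a) (hp0 c)) (sq_nonneg _)) (mem_univ a)

theorem stmt7_general (c : ℝ) (hc : 0 < c) (D : ℕ) :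
    ∃ C : ℝ, 0 < C ∧
      ∀ (k : ℕ), 1 ≤ k →
      ∀ (p : Fin k → ℝ) (Q : Fin k → Fin k → ℝ),
        (∀ i, 0 ≤ p i) → (∑ i, p i = 1) →
        ∀ (hQ : ∀ i j, Q i j = Q j i),
        (∀ i j, |Q i j| ≤ 1) → (∀ i, c ≤ p i) →
      ∀ (V : Type) [Fintype V] [DecidableEq V] (H : SimpleGraph V) [DecidableRel H.Adj],
        H.Connected → H.edgeFinset.card ≤ D →
        Fintype.card V ≤ H.edgeFinset.card →
        Psi p Q hQ H ≤ C * Psi p Q hQ Cyc4 := by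
  refine ⟨(c ^ (4⁻¹ : ℝ) * c)⁻¹, by positivity, ?_⟩
  intro k _ p Q hp0 hp1 hQ hQ1 hpc V _ _ H _ hH _ hVE
  have := hH.nonempty
  set S := l2NormSq p Q
  have hS : 0 ≤ S := l2NormSq_nonneg hp0
  have upper : Psi p Q hQ H ≤ √S / c :=
    Psi_le_of_abs_le hp0 hp1 hQ1 (by positivity) (abs_le_sqrt_l2NormSq_div hc hpc) hVE
  have lower : c ^ (4⁻¹ : ℝ) * √S ≤ Psi p Q hQ Cyc4 := by
    refine le_Psi_of_pow_le_abs_Phi (by positivity) ?_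
    calc (c ^ (4⁻¹ : ℝ) * √S) ^ Fintype.card (Fin 4) = c * S ^ 2 := by
          have hc4 : (c ^ (4⁻¹ : ℝ)) ^ 4 = c := Real.rpow_inv_natCast_pow (n := 4) hc.le four_ne_zero
          rw [Fintype.card_fin, mul_pow, hc4, show √S ^ 4 = (√S ^ 2) ^ 2 by ring, Real.sq_sqrt hS]
      _ ≤ Phi p Q hQ Cyc4 := mul_l2NormSq_sq_le_Phi_Cyc4 hc.le hpc hp1
      _ ≤ |Phi p Q hQ Cyc4| := le_abs_self _
  calc Psi p Q hQ H ≤ √S / c := upper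
    _ = (c ^ (4⁻¹ : ℝ) * c)⁻¹ * (c ^ (4⁻¹ : ℝ) * √S) := by field_simp
    _ ≤ (c ^ (4⁻¹ : ℝ) * c)⁻¹ * Psi p Q hQ Cyc4 := by gcongr

/-- for SBMs with non-vanishing community probabilities, 4-cycles
dominate connected graphs which are not trees. -/
theorem stmt7 (c : ℝ) (hc : 0 < c) (D : ℕ) (hD : 1 ≤ D) :
    ∃ C : ℝ, 0 < C ∧
      ∀ (k : ℕ), 1 ≤ k →
      ∀ (p : Fin k → ℝ) (Q : Fin k → Fin k → ℝ),
        (∀ i, 0 ≤ p i) → (∑ i, p i = 1) →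
        ∀ (hQ : ∀ i j, Q i j = Q j i),
        (∀ i j, |Q i j| ≤ 1) → (∀ i, c ≤ p i) →
      ∀ (V : Type) [Fintype V] [DecidableEq V] (H : SimpleGraph V) [DecidableRel H.Adj],
        H.Connected → H.edgeFinset.card ≤ D →
        Fintype.card V ≤ H.edgeFinset.card →
        Psi p Q hQ H ≤ C * Psi p Q hQ Cyc4 :=
  stmt7_general c hc D
end

section
/- For every C ≥ 128, every K > 0 and every odd natural number T ≥ 3 there exists a constant C' = C'(C,K,T) > 0 such that the following holds. Let (p,Q) be a block-model parameter pair on 2 communities with p₁ ≤ p₂, and set μ = p₁Q₁₁ + p₂Q₁₂, λ = p₁Q₁₂ + p₂Q₂₂. Assume: (i) p₁|Q₁₁| + p₂|Q₁₂| ≤ C|μ|; (ii) p₁|Q₁₂| + p₂|Q₂₂| ≤ C|λ|; (iii) (4C²)^T · |p₁μ^T + p₂λ^T| ≤ p₁|μ|^T + p₂|λ|^T; (iv) p₁|Q₁₁| ≤ |Q₁₂|; and (v) |Q₁₂| ≤ p₁. Then every finite simple graph H with at least one vertex satisfying |Φ_{p,Q}(H)|^{1/|V(H)|} ≤ K ·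 (p₁·(p₁|Q₁₁| + p₂|Q₁₂|)^T + p₂·(p₁|Q₁₂| + p₂|Q₂₂|)^T)^{1/(T+1)} also satisfies Ψ_{p,Q}(H) ≤ C' · Ψ_{p,Q}(Star_{T−1}). -/
set_option linter.unusedVariables false

open Finset

open Finset

/-!
Write `μ`, `λ` for the row means of `Q` and `a ≥ |μ|`, `b ≥ |λ|` for the absolute ones.
Conditions (i) and (ii) give `a ≤ C |μ|` and `b ≤ C |λ|`, and the near-cancellation (iii)
forces `p₂ |λ|^T ≤ 3 p₁ |μ|^T`, so `p₁ a^T + p₂ b^T ≤ (4C)^T p₁ |μ|^T`. Conditions (iv) and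
(v) give `|μ| ≤ 2 p₁`, which upgrades this to
`(p₁ a^T + p₂ b^T)^{1/(T+1)} ≤ 4C (p₁ |μ|^{T-1})^{1/T}`. Since `T - 1` is even,
`Φ(Star_{T-1}) = Σᵢ pᵢ μᵢ^{T-1}` has no cancellation and is at least `p₁ |μ|^{T-1}`.
-/

lemma StarGraph.prod_edgeFinset {M : Type*} [CommMonoid M] (t : ℕ) (f : Sym2 (Fin (t + 1)) → M) :
    ∏ e ∈ (StarGraph t).edgeFinset, f e = ∏ i : Fin t, f s(0, i.succ) := by
  refine (Finset.prod_bij (fun i _ => s(0, i.succ)) ?_ ?_ ?_ fun _ _ => rfl).symm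
  · intro i _
    rw [SimpleGraph.mem_edgeFinset, SimpleGraph.mem_edgeSet]
    exact ⟨(Fin.succ_ne_zero i).symm, Or.inl rfl⟩
  · intro a _ b _ h
    rcases Sym2.eq_iff.mp h with ⟨-, h⟩ | ⟨h, -⟩
    · exact Fin.succ_injective _ h
    · exact absurd h.symm (Fin.succ_ne_zero b)
  · intro e he
    induction e using Sym2.ind with
    | _ u v =>
      obtain ⟨hne, rfl | rfl⟩ := SimpleGraph.mem_edgeFinset.mp he
      · obtain ⟨a, rfl⟩ := Fin.exists_succ_eq.mpr (Ne.symm hne)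
        exact ⟨a, mem_univ _, rfl⟩
      · obtain ⟨a, rfl⟩ := Fin.exists_succ_eq.mpr hne
        exact ⟨a, mem_univ _, Sym2.eq_swap⟩

section Star

variable {k : ℕ} (p : Fin k → ℝ) (Q : Fin k → Fin k → ℝ) (hQ : ∀ i j, Q i j = Q j i)

/-- Labelling the center by `i`, the leaves are labelled independently. -/
theorem phi_starGraph (t : ℕ) :
    Phi p Q hQ (StarGraph t) = ∑ i, p i * (∑ j, p j * Q i j) ^ t := by
  unfold Phi
  rw [← (Fin.consEquiv fun _ : Fin (t + 1) => Fin k).sum_comp, Fintype.sum_prod_type]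
  refine Finset.sum_congr rfl fun i _ => ?_
  simp only [StarGraph.prod_edgeFinset, Fin.consEquiv_apply, Fin.prod_univ_succ, Fin.cons_zero,
    Fin.cons_succ, Sym2.lift_mk, mul_assoc, ← Finset.prod_mul_distrib, ← Finset.mul_sum]
  rw [← Fintype.prod_sum fun _ : Fin t => fun c => p c * Q i c, Finset.prod_const,
    Finset.card_univ, Fintype.card_fin]

variable {p} {t : ℕ}

theorem mul_abs_pow_le_phi_starGraph (hp : ∀ i, 0 ≤ p i) (ht : Even t) (i : Fin k) :
    p i * |∑ j, p j * Q i j| ^ t ≤ Phi p Q hQ (StarGraph t) := by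
  rw [phi_starGraph]
  refine Finset.single_le_sum (f := fun i => p i * (∑ j, p j * Q i j) ^ t)
    (fun i _ => ?_) (mem_univ i) |>.trans_eq' (by rw [ht.pow_abs])
  exact mul_nonneg (hp i) (ht.pow_nonneg _)

theorem rpow_le_psi_starGraph (hp : ∀ i, 0 ≤ p i) (ht : Even t) (i : Fin k) :
    (p i * |∑ j, p j * Q i j| ^ t) ^ (((t + 1 : ℕ) : ℝ)⁻¹) ≤ Psi p Q hQ (StarGraph t) := by
  unfold Psi
  rw [Fintype.card_fin]
  gcongr
  · exact mul_nonneg (hp i) (pow_nonneg (abs_nonneg _) t)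
  · exact (mul_abs_pow_le_phi_starGraph Q hQ hp ht i).trans (le_abs_self _)

end Star

theorem abs_le_three_mul_abs_of_mul_abs_add_le {u v M : ℝ} (hM : 2 ≤ M)
    (h : M * |u + v| ≤ |u| + |v|) : |v| ≤ 3 * |u| := by
  have hv : |v| ≤ |u + v| + |u| := by simpa using abs_sub (u + v) u
  nlinarith [abs_nonneg (u + v)]

theorem moment_le_of_cancellation {p₀ p₁ μ ν a b C : ℝ} {T : ℕ} (hT : T ≠ 0)
    (hp₀ : 0 ≤ p₀) (hp₁ : 0 ≤ p₁) (hC : 1 ≤ C) (ha₀ : 0 ≤ a) (hb₀ : 0 ≤ b)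
    (ha : a ≤ C * |μ|) (hb : b ≤ C * |ν|)
    (hcanc : (4 * C ^ 2) ^ T * |p₀ * μ ^ T + p₁ * ν ^ T| ≤ p₀ * |μ| ^ T + p₁ * |ν| ^ T) :
    p₀ * a ^ T + p₁ * b ^ T ≤ (4 * C) ^ T * (p₀ * |μ| ^ T) := by
  have hM : 2 ≤ (4 * C ^ 2) ^ T :=
    (by nlinarith : (2 : ℝ) ≤ 4 * C ^ 2).trans (le_self_pow₀ (by nlinarith) hT)
  have hνμ : p₁ * |ν| ^ T ≤ 3 * (p₀ * |μ| ^ T) := by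
    have := abs_le_three_mul_abs_of_mul_abs_add_le (u := p₀ * μ ^ T) (v := p₁ * ν ^ T) hM (by
      simpa only [abs_mul, abs_pow, abs_of_nonneg hp₀, abs_of_nonneg hp₁] using hcanc)
    simpa only [abs_mul, abs_pow, abs_of_nonneg hp₀, abs_of_nonneg hp₁] using this
  calc p₀ * a ^ T + p₁ * b ^ T ≤ p₀ * (C * |μ|) ^ T + p₁ * (C * |ν|) ^ T := by gcongr
    _ = C ^ T * (p₀ * |μ| ^ T + p₁ * |ν| ^ T) := by ring
    _ ≤ C ^ T * (4 * (p₀ * |μ| ^ T)) := by gcongr; linarith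
    _ = 4 * (C ^ T * (p₀ * |μ| ^ T)) := by ring
    _ ≤ 4 ^ T * (C ^ T * (p₀ * |μ| ^ T)) := by gcongr; exact le_self_pow₀ (by norm_num) hT
    _ = (4 * C) ^ T * (p₀ * |μ| ^ T) := by ring

theorem pow_succ_le_of_le_mul_pow_succ {B D w s : ℝ} (n : ℕ) (hB : 0 ≤ B) (hD : 2 ≤ D)
    (hw : 0 ≤ w) (hs : 0 ≤ s) (hsw : s ≤ 2 * w) (h : B ≤ D * (w * s ^ (n + 1))) :
    B ^ (n + 1) ≤ (D * (w * s ^ n)) ^ (n + 2) := by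
  have hws : (w * s ^ (n + 1)) ^ (n + 1) ≤ 2 * (w * s ^ n) ^ (n + 2) :=
    calc (w * s ^ (n + 1)) ^ (n + 1) = (w * s ^ n) ^ (n + 1) * (s ^ n * s) := by ring
      _ ≤ (w * s ^ n) ^ (n + 1) * (s ^ n * (2 * w)) := by gcongr
      _ = 2 * (w * s ^ n) ^ (n + 2) := by ring
  calc B ^ (n + 1) ≤ D ^ (n + 1) * (w * s ^ (n + 1)) ^ (n + 1) := by rw [← mul_pow]; gcongr
    _ ≤ D ^ (n + 1) * (D * (w * s ^ n) ^ (n + 2)) := by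
      gcongr
      exact hws.trans (by gcongr)
    _ = (D * (w * s ^ n)) ^ (n + 2) := by ring

theorem rpow_inv_succ_le_rpow_inv {B Y : ℝ} {n : ℕ} (hn : n ≠ 0) (hB : 0 ≤ B) (hY : 0 ≤ Y)
    (h : B ^ n ≤ Y ^ (n + 1)) : B ^ (1 / ((n : ℝ) + 1)) ≤ Y ^ ((n : ℝ)⁻¹) := by
  have hn' : (n : ℝ) ≠ 0 := Nat.cast_ne_zero.mpr hn
  have := Real.rpow_le_rpow (pow_nonneg hB n) h (by positivity : (0 : ℝ) ≤ ((n : ℝ) * (n + 1))⁻¹)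
  rw [← Real.rpow_natCast B, ← Real.rpow_natCast Y, ← Real.rpow_mul hB,
    ← Real.rpow_mul hY] at this
  convert this using 2 <;> push_cast <;> field_simp

theorem stmt16_general (C : ℝ) (hC : 128 ≤ C) (K : ℝ) (hK : 0 < K)
    (T : ℕ) (hTodd : Odd T) :
    ∃ C' : ℝ, 0 < C' ∧
      ∀ (p : Fin 2 → ℝ) (Q : Fin 2 → Fin 2 → ℝ),
        (∀ i, 0 ≤ p i) → (∑ i, p i = 1) →
        ∀ (hQ : ∀ i j, Q i j = Q j i),
        (∀ i j, |Q i j| ≤ 1) → p 0 ≤ p 1 →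
        p 0 * |Q 0 0| + p 1 * |Q 0 1| ≤ C * |p 0 * Q 0 0 + p 1 * Q 0 1| →
        p 0 * |Q 0 1| + p 1 * |Q 1 1| ≤ C * |p 0 * Q 0 1 + p 1 * Q 1 1| →
        (4 * C ^ 2) ^ T *
            |p 0 * (p 0 * Q 0 0 + p 1 * Q 0 1) ^ T +
              p 1 * (p 0 * Q 0 1 + p 1 * Q 1 1) ^ T| ≤
          p 0 * |p 0 * Q 0 0 + p 1 * Q 0 1| ^ T +
            p 1 * |p 0 * Q 0 1 + p 1 * Q 1 1| ^ T →
        p 0 * |Q 0 0| ≤ |Q 0 1| → |Q 0 1| ≤ p 0 →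
      ∀ (V : Type) [Fintype V] [DecidableEq V] (H : SimpleGraph V) [DecidableRel H.Adj],
        Nonempty V →
        |Phi p Q hQ H| ^ ((Fintype.card V : ℝ)⁻¹) ≤
          K * (p 0 * (p 0 * |Q 0 0| + p 1 * |Q 0 1|) ^ T +
                p 1 * (p 0 * |Q 0 1| + p 1 * |Q 1 1|) ^ T) ^ (1 / ((T : ℝ) + 1)) →
        Psi p Q hQ H ≤ C' * Psi p Q hQ (StarGraph (T - 1)) := by
  obtain ⟨m, rfl⟩ := hTodd
  refine ⟨4 * C * K, by positivity, ?_⟩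
  intro p Q hp hsum hQ _ _ hμ hν hcanc hQ₀₀ hQ₀₁ V _ _ H _ _ hH
  rw [Nat.add_sub_cancel]
  have hp₀ := hp 0
  have hp₁ := hp 1
  have hC₀ : 0 ≤ C := by linarith
  set μ := p 0 * Q 0 0 + p 1 * Q 0 1
  set a := p 0 * |Q 0 0| + p 1 * |Q 0 1|
  have hp₁_le : p 1 ≤ 1 := by rw [Fin.sum_univ_two] at hsum; linarith
  have hμa : |μ| ≤ a := (abs_add_le _ _).trans_eq <| by
    rw [abs_mul, abs_mul, abs_of_nonneg hp₀, abs_of_nonneg hp₁]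
  have ha : a ≤ 2 * p 0 := by linarith [mul_le_of_le_one_left (abs_nonneg (Q 0 1)) hp₁_le]
  have hD : (2 : ℝ) ≤ (4 * C) ^ (2 * m + 1) :=
    (by linarith : (2 : ℝ) ≤ 4 * C).trans (le_self_pow₀ (by linarith) (Nat.succ_ne_zero _))
  have hpow := pow_succ_le_of_le_mul_pow_succ (2 * m) (by positivity) hD hp₀ (abs_nonneg μ)
    (hμa.trans ha) (moment_le_of_cancellation (Nat.succ_ne_zero _) hp₀ hp₁ (by linarith)
      (by positivity) (by positivity) hμ hν hcanc)
  have hstar := rpow_le_psi_starGraph Q hQ hp (even_two_mul m) 0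
  rw [Fin.sum_univ_two] at hstar
  calc Psi p Q hQ H ≤ K * _ := hH
    _ ≤ K * ((4 * C) ^ (2 * m + 1) * (p 0 * |μ| ^ (2 * m))) ^ ((↑(2 * m + 1) : ℝ)⁻¹) := by
      gcongr
      exact rpow_inv_succ_le_rpow_inv (Nat.succ_ne_zero _) (by positivity) (by positivity) hpow
    _ = 4 * C * K * (p 0 * |μ| ^ (2 * m)) ^ ((↑(2 * m + 1) : ℝ)⁻¹) := by
      rw [Real.mul_rpow (by positivity) (by positivity),
        Real.pow_rpow_inv_natCast (by positivity) (Nat.succ_ne_zero _)]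
      ring
    _ ≤ 4 * C * K * Psi p Q hQ (StarGraph (2 * m)) := by gcongr

/-- between-community cancellations with |Q₁₂| ≤ p₁ and T ≥ 3:
Star_{T-1} dominates. -/
theorem stmt16 (C : ℝ) (hC : 128 ≤ C) (K : ℝ) (hK : 0 < K)
    (T : ℕ) (hT : 3 ≤ T) (hTodd : Odd T) :
    ∃ C' : ℝ, 0 < C' ∧
      ∀ (p : Fin 2 → ℝ) (Q : Fin 2 → Fin 2 → ℝ),
        (∀ i, 0 ≤ p i) → (∑ i, p i = 1) →
        ∀ (hQ : ∀ i j, Q i j = Q j i),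
        (∀ i j, |Q i j| ≤ 1) → p 0 ≤ p 1 →
        p 0 * |Q 0 0| + p 1 * |Q 0 1| ≤ C * |p 0 * Q 0 0 + p 1 * Q 0 1| →
        p 0 * |Q 0 1| + p 1 * |Q 1 1| ≤ C * |p 0 * Q 0 1 + p 1 * Q 1 1| →
        (4 * C ^ 2) ^ T *
            |p 0 * (p 0 * Q 0 0 + p 1 * Q 0 1) ^ T +
              p 1 * (p 0 * Q 0 1 + p 1 * Q 1 1) ^ T| ≤
          p 0 * |p 0 * Q 0 0 + p 1 * Q 0 1| ^ T +
            p 1 * |p 0 * Q 0 1 + p 1 * Q 1 1| ^ T →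
        p 0 * |Q 0 0| ≤ |Q 0 1| → |Q 0 1| ≤ p 0 →
      ∀ (V : Type) [Fintype V] [DecidableEq V] (H : SimpleGraph V) [DecidableRel H.Adj],
        Nonempty V →
        |Phi p Q hQ H| ^ ((Fintype.card V : ℝ)⁻¹) ≤
          K * (p 0 * (p 0 * |Q 0 0| + p 1 * |Q 0 1|) ^ T +
                p 1 * (p 0 * |Q 0 1| + p 1 * |Q 1 1|) ^ T) ^ (1 / ((T : ℝ) + 1)) →
        Psi p Q hQ H ≤ C' * Psi p Q hQ (StarGraph (T - 1)) :=
  stmt16_general C hC K hK T hTodd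
end
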